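/- The positive cone of the ring R̄ of Colombeau generalized real numbers is not open in the sharp topology: for any nontrivial idempotent e ∈ R̄, the sequence x_n = e − (1−e)·α^n (n ∈ ℕ) consists of elements that are not nonnegative, yet x_n converges to the nonnegative element e in the sharp topology. -/

import Mathlib

noncomputable section

open Real

/-- `P ε` holds for all sufficiently small `ε ∈ (0,1]`. -/
def SmallEv (P : ℝ → Prop) : Prop :=
  ∃ η : ℝ, 0 < η ∧ ∀ ε : ℝ, 0 < ε → ε ≤ η → P ε

/-- A net `x : (0,1] → ℝ` (modeled on all of `ℝ`) is moderate. -/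
def Moderate (x : ℝ → ℝ) : Prop :=
  ∃ r : ℝ, SmallEv fun ε => |x ε| < ε ^ r

/-- A net is negligible. -/
def Negligible (x : ℝ → ℝ) : Prop :=
  ∀ n : ℕ, SmallEv fun ε => |x ε| < ε ^ (n : ℝ)

lemma smallEv_and {P Q : ℝ → Prop} (hP : SmallEv P) (hQ : SmallEv Q) :
    SmallEv fun ε => P ε ∧ Q ε := by
  obtain ⟨a, ha, hP⟩ := hP
  obtain ⟨b, hb, hQ⟩ := hQ
  exact ⟨min a b, lt_min ha hb, fun ε hε hle =>
    ⟨hP ε hε (hle.trans (min_le_left _ _)), hQ ε hε (hle.trans (min_le_right _ _))⟩⟩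

lemma moderate_zero : Moderate (0 : ℝ → ℝ) :=
  ⟨0, 1, one_pos, fun ε hε _ => by simp⟩

lemma moderate_one : Moderate (1 : ℝ → ℝ) := by
  refine ⟨-1, 1/2, by norm_num, fun ε hε hle => ?_⟩
  have h1 : ε < 1 := lt_of_le_of_lt hle (by norm_num)
  show |(1 : ℝ → ℝ) ε| < ε ^ (-1 : ℝ)
  rw [Real.rpow_neg_one]
  simpa using (one_lt_inv₀ hε).mpr h1

lemma moderate_neg {x : ℝ → ℝ} (hx : Moderate x) : Moderate (-x) := by
  obtain ⟨r, η, hη, h⟩ := hx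
  exact ⟨r, η, hη, fun ε hε hle => by simpa using h ε hε hle⟩

lemma moderate_add {x y : ℝ → ℝ} (hx : Moderate x) (hy : Moderate y) :
    Moderate (x + y) := by
  obtain ⟨r, hr⟩ := hx
  obtain ⟨s, hs⟩ := hy
  obtain ⟨η, hη, h⟩ := smallEv_and hr hs
  refine ⟨min r s - 1, min η (1/2), lt_min hη (by norm_num), fun ε hε hle => ?_⟩
  have hεhalf : ε ≤ 1/2 := hle.trans (min_le_right _ _)
  have hε1 : ε ≤ 1 := hεhalf.trans (by norm_num)
  obtain ⟨h1, h2⟩ := h ε hε (hle.trans (min_le_left _ _))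
  have h2inv : (2 : ℝ) ≤ ε⁻¹ := by
    rw [le_inv_comm₀ (by norm_num) hε]
    linarith
  calc |(x + y) ε| ≤ |x ε| + |y ε| := abs_add_le _ _
    _ < ε ^ r + ε ^ s := add_lt_add h1 h2
    _ ≤ ε ^ min r s + ε ^ min r s :=
        add_le_add (Real.rpow_le_rpow_of_exponent_ge hε hε1 (min_le_left _ _))
          (Real.rpow_le_rpow_of_exponent_ge hε hε1 (min_le_right _ _))
    _ = 2 * ε ^ min r s := by ring
    _ ≤ ε⁻¹ * ε ^ min r s :=
        mul_le_mul_of_nonneg_right h2inv (Real.rpow_nonneg hε.le _)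
    _ = ε ^ (min r s - 1) := by
        rw [← Real.rpow_neg_one ε, ← Real.rpow_add hε]
        ring_nf

lemma moderate_mul {x y : ℝ → ℝ} (hx : Moderate x) (hy : Moderate y) :
    Moderate (x * y) := by
  obtain ⟨r, hr⟩ := hx
  obtain ⟨s, hs⟩ := hy
  obtain ⟨η, hη, h⟩ := smallEv_and hr hs
  refine ⟨r + s, η, hη, fun ε hε hle => ?_⟩
  obtain ⟨h1, h2⟩ := h ε hε hle
  have : |(x * y) ε| = |x ε| * |y ε| := by simp [abs_mul]
  rw [this, Real.rpow_add hε]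
  exact mul_lt_mul'' h1 h2 (abs_nonneg _) (abs_nonneg _)

/-- The ring `E_M` of moderate nets, as a subring of `ℝ → ℝ`. -/
def EMring : Subring (ℝ → ℝ) where
  carrier := {x | Moderate x}
  mul_mem' := moderate_mul
  one_mem' := moderate_one
  add_mem' := moderate_add
  zero_mem' := moderate_zero
  neg_mem' := moderate_neg

lemma negligible_zero : Negligible (0 : ℝ → ℝ) := fun n =>
  ⟨1, one_pos, fun ε hε _ => by simpa using Real.rpow_pos_of_pos hε (n : ℝ)⟩

lemma negligible_add {x y : ℝ → ℝ} (hx : Negligible x) (hy : Negligible y) :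
    Negligible (x + y) := by
  intro n
  obtain ⟨η, hη, h⟩ := smallEv_and (hx (n + 1)) (hy (n + 1))
  refine ⟨min η (1/2), lt_min hη (by norm_num), fun ε hε hle => ?_⟩
  have hεhalf : ε ≤ 1/2 := hle.trans (min_le_right _ _)
  obtain ⟨h1, h2⟩ := h ε hε (hle.trans (min_le_left _ _))
  have hcast : ((n + 1 : ℕ) : ℝ) = (n : ℝ) + 1 := by push_cast; ring
  have hsplit : ε ^ ((n + 1 : ℕ) : ℝ) = ε ^ (n : ℝ) * ε := by
    rw [hcast, Real.rpow_add hε, Real.rpow_one]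
  calc |(x + y) ε| ≤ |x ε| + |y ε| := abs_add_le _ _
    _ < ε ^ ((n + 1 : ℕ) : ℝ) + ε ^ ((n + 1 : ℕ) : ℝ) := add_lt_add h1 h2
    _ = (2 * ε) * ε ^ (n : ℝ) := by rw [hsplit]; ring
    _ ≤ 1 * ε ^ (n : ℝ) := by
        apply mul_le_mul_of_nonneg_right _ (Real.rpow_nonneg hε.le _)
        linarith
    _ = ε ^ (n : ℝ) := one_mul _

lemma negligible_smul {x y : ℝ → ℝ} (hx : Moderate x) (hy : Negligible y) :
    Negligible (x * y) := by
  intro n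
  obtain ⟨r, hr⟩ := hx
  set k : ℕ := n + Nat.ceil (max 0 (-r)) with hk
  obtain ⟨η, hη, h⟩ := smallEv_and hr (hy k)
  refine ⟨min η 1, lt_min hη one_pos, fun ε hε hle => ?_⟩
  have hε1 : ε ≤ 1 := hle.trans (min_le_right _ _)
  obtain ⟨h1, h2⟩ := h ε hε (hle.trans (min_le_left _ _))
  have hexp : (n : ℝ) ≤ r + (k : ℝ) := by
    have h1' : (-r) ≤ (Nat.ceil (max 0 (-r)) : ℝ) :=
      le_trans (le_max_right 0 (-r)) (Nat.le_ceil _)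
    have : (k : ℝ) = (n : ℝ) + (Nat.ceil (max 0 (-r)) : ℝ) := by
      rw [hk]; push_cast; ring
    linarith
  show |(x * y) ε| < ε ^ (n : ℝ)
  have hxy : |(x * y) ε| = |x ε| * |y ε| := by simp [abs_mul]
  rw [hxy]
  calc |x ε| * |y ε| < ε ^ r * ε ^ (k : ℝ) :=
        mul_lt_mul'' h1 h2 (abs_nonneg _) (abs_nonneg _)
    _ = ε ^ (r + (k : ℝ)) := (Real.rpow_add hε _ _).symm
    _ ≤ ε ^ (n : ℝ) := Real.rpow_le_rpow_of_exponent_ge hε hε1 hexp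

/-- The ideal of negligible nets inside `E_M`. -/
def NegIdeal : Ideal EMring where
  carrier := {x | Negligible x.1}
  add_mem' := fun hx hy => negligible_add hx hy
  zero_mem' := negligible_zero
  smul_mem' := fun c _ hx => negligible_smul c.2 hx

/-- The ring of Colombeau generalized real numbers. -/
abbrev Rbar := EMring ⧸ NegIdeal

/-- Class of a moderate net in `R̄`. -/
def mkR (x : EMring) : Rbar := Ideal.Quotient.mk NegIdeal x

/-- The valuation `V` on the quotient. -/
def VQ (x : Rbar) : ℝ :=
  sSup {r : ℝ | ∃ x' : EMring, mkR x' = x ∧ SmallEv fun ε => |x'.1 ε| < ε ^ r}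

open Classical in
/-- sharp norm on `R̄`. -/
def normQ (x : Rbar) : ℝ := if x = 0 then 0 else Real.exp (-(VQ x))

/-- sharp distance on `R̄`. -/
def sharpDist (x y : Rbar) : ℝ := normQ (x - y)

/-- `x` is nonnegative: it has a representative which is nonnegative on `(0,1]`. -/
def NonnegQ (x : Rbar) : Prop :=
  ∃ x' : EMring, mkR x' = x ∧ ∀ ε : ℝ, 0 < ε → ε ≤ 1 → 0 ≤ x'.1 ε

/-- `x` belongs to `V_r(0)`: some representative satisfies `|x_ε| < ε^r` eventually. -/
def InVr (r : ℝ) (x : Rbar) : Prop :=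
  ∃ x' : EMring, mkR x' = x ∧ SmallEv fun ε => |x'.1 ε| < ε ^ r

/-- `x ≥ α^m`: some representative satisfies `x_ε ≥ ε^m` eventually. -/
def GeAlpha (m : ℝ) (x : Rbar) : Prop :=
  ∃ x' : EMring, mkR x' = x ∧ SmallEv fun ε => ε ^ m ≤ x'.1 ε

lemma idNet_moderate : Moderate (fun ε : ℝ => ε) := by
  refine ⟨0, 1/2, by norm_num, fun ε hε hle => ?_⟩
  show |ε| < ε ^ (0 : ℝ)
  rw [Real.rpow_zero, abs_of_pos hε]
  linarith

/-- The generalized number `α = [ε ↦ ε]`. -/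
def alphaQ : Rbar := mkR ⟨fun ε => ε, idNet_moderate⟩

lemma chi_moderate (S : Set ℝ) : Moderate (S.indicator fun _ => (1 : ℝ)) := by
  refine ⟨-1, 1/2, by norm_num, fun ε hε hle => ?_⟩
  have h1 : ε < 1 := lt_of_le_of_lt hle (by norm_num)
  have hlt : (1 : ℝ) < ε ^ (-1 : ℝ) := by
    rw [Real.rpow_neg_one]
    exact (one_lt_inv₀ hε).mpr h1
  by_cases h : ε ∈ S <;> simp [Set.indicator, h] <;> linarith [hlt]

/-- Hypernatural numbers: moderate nets with values in `ℕ`. -/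
def HyperNat : Type := {f : ℝ → ℕ // Moderate fun ε => (f ε : ℝ)}

/-- Strict order on hypernaturals: eventually pointwise. -/
def HNlt (m n : HyperNat) : Prop := SmallEv fun ε => m.1 ε < n.1 ε

/-! Write `e = [x]`. Idempotency makes `|x_ε| · |x_ε - 1|` negligible, so the negative part of
`x` is negligible and `e` is represented by the positive part of `x`. Since `e ≠ 1`,
`|x_ε - 1| ≥ ε^m` along some sequence `ε → 0`, and there `x_ε` is smaller than every power of `ε`;
at such `ε` every representative of `e - (1 - e) α^n` is about `-ε^n < 0`. Finally
`e - (1 - e) α^n - e = (e - 1) α^n` with `e - 1` bounded, so its sharp norm is at most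
`exp (1 - n)`. -/

open Filter Topology Set

lemma smallEv_iff_eventually {P : ℝ → Prop} : SmallEv P ↔ ∀ᶠ ε in 𝓝[>] (0 : ℝ), P ε := by
  rw [Filter.Eventually, mem_nhdsGT_iff_exists_Ioc_subset]
  exact ⟨fun ⟨η, hη, h⟩ => ⟨η, hη, fun ε hε => h ε hε.1 hε.2⟩,
    fun ⟨η, hη, h⟩ => ⟨η, hη, fun ε h0 hle => h ⟨h0, hle⟩⟩⟩

lemma Negligible.eventually_abs_lt {x : ℝ → ℝ} (hx : Negligible x) (n : ℕ) :
    ∀ᶠ ε in 𝓝[>] (0 : ℝ), |x ε| < ε ^ n := by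
  simpa only [Real.rpow_natCast] using smallEv_iff_eventually.1 (hx n)

lemma exists_frequently_pow_le_of_not_negligible {x : ℝ → ℝ} (hx : ¬ Negligible x) :
    ∃ n : ℕ, ∃ᶠ ε in 𝓝[>] (0 : ℝ), ε ^ n ≤ |x ε| := by
  simpa only [Negligible, smallEv_iff_eventually, not_forall, not_eventually, not_lt,
    Real.rpow_natCast] using hx

lemma Negligible.of_abs_le {x y : ℝ → ℝ} (hx : Negligible x) (h : ∀ ε, |y ε| ≤ |x ε|) :
    Negligible y := fun n =>
  let ⟨η, hη, hx⟩ := hx n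
  ⟨η, hη, fun ε hε hle => (h ε).trans_lt (hx ε hε hle)⟩

lemma Moderate.of_abs_le {x y : ℝ → ℝ} (hx : Moderate x) (h : ∀ ε, |y ε| ≤ |x ε|) :
    Moderate y :=
  let ⟨r, η, hη, hx⟩ := hx
  ⟨r, η, hη, fun ε hε hle => (h ε).trans_lt (hx ε hε hle)⟩

lemma mkR_surjective : Function.Surjective mkR := Ideal.Quotient.mk_surjective

lemma mkR_eq_zero_iff {x : EMring} : mkR x = 0 ↔ Negligible x.1 :=
  Ideal.Quotient.eq_zero_iff_mem

lemma mkR_eq_mkR_iff {x y : EMring} : mkR x = mkR y ↔ Negligible (x.1 - y.1) :=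
  Ideal.Quotient.eq

def alphaNet : EMring := ⟨fun ε => ε, idNet_moderate⟩

lemma alphaNet_apply (ε : ℝ) : alphaNet.1 ε = ε := rfl

lemma mkR_alphaNet : mkR alphaNet = alphaQ := rfl

section Idempotent

variable {x : ℝ → ℝ}

lemma abs_mul_self_sub_apply (x : ℝ → ℝ) (ε : ℝ) : |(x * x - x) ε| = |x ε| * |x ε - 1| := by
  rw [← abs_mul, Pi.sub_apply, Pi.mul_apply, mul_sub_one]

/-- Where `|x_ε - 1| ≥ ε^m`, negligibility of `|x_ε| · |x_ε - 1|` forces `|x_ε| < ε^k`. -/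
lemma frequently_abs_lt_of_idempotent (hid : Negligible (x * x - x))
    (hne : ¬ Negligible (x - 1)) (k : ℕ) : ∃ᶠ ε in 𝓝[>] (0 : ℝ), |x ε| < ε ^ k := by
  obtain ⟨m, hm⟩ := exists_frequently_pow_le_of_not_negligible hne
  refine (hm.and_eventually ((hid.eventually_abs_lt (m + k)).and self_mem_nhdsWithin)).mono ?_
  rintro ε ⟨hlow, hsmall, hε⟩
  rw [abs_mul_self_sub_apply, pow_add] at hsmall
  rw [Pi.sub_apply, Pi.one_apply] at hlow
  by_contra! h
  nlinarith [mul_le_mul h hlow (pow_pos (mem_Ioi.1 hε) m).le (abs_nonneg (x ε))]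

lemma eventually_abs_sub_one_le_of_idempotent (hid : Negligible (x * x - x)) :
    ∀ᶠ ε in 𝓝[>] (0 : ℝ), |x ε - 1| ≤ 2 := by
  filter_upwards [hid.eventually_abs_lt 0] with ε hε
  rw [abs_mul_self_sub_apply, pow_zero] at hε
  by_contra! h
  have : 1 < |x ε| := by linarith [abs_sub (x ε) 1, abs_one (α := ℝ)]
  nlinarith [abs_nonneg (x ε)]

lemma abs_min_zero_le_of_idempotent (ε : ℝ) : |min (x ε) 0| ≤ |(x * x - x) ε| := by
  rw [abs_mul_self_sub_apply]
  rcases le_or_gt 0 (x ε) with h | h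
  · rw [min_eq_right h, abs_zero]; positivity
  · have : 1 ≤ |x ε - 1| := by rw [abs_of_neg (by linarith)]; linarith
    rw [min_eq_left h.le]
    nlinarith [abs_nonneg (x ε)]

end Idempotent

lemma nonnegQ_mkR_of_negligible_min_zero {x : EMring} (h : Negligible fun ε => min (x.1 ε) 0) :
    NonnegQ (mkR x) := by
  have hmod : Moderate fun ε => max (x.1 ε) 0 :=
    x.2.of_abs_le fun ε => by
      rw [abs_of_nonneg (le_max_right _ _)]
      exact max_le (le_abs_self _) (abs_nonneg _)
  refine ⟨⟨_, hmod⟩, mkR_eq_mkR_iff.2 (h.of_abs_le fun ε => ?_), fun ε _ _ => le_max_right _ _⟩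
  rcases le_total 0 (x.1 ε) with hx | hx
  · simp [hx]
  · simp [hx, abs_neg]

lemma nonnegQ_of_idempotent {x : EMring} (hid : Negligible (x.1 * x.1 - x.1)) :
    NonnegQ (mkR x) :=
  nonnegQ_mkR_of_negligible_min_zero (hid.of_abs_le abs_min_zero_le_of_idempotent)

lemma NonnegQ.eventually_neg_pow_lt {z : EMring} (h : NonnegQ (mkR z)) (n : ℕ) :
    ∀ᶠ ε in 𝓝[>] (0 : ℝ), -ε ^ n < z.1 ε := by
  obtain ⟨w, hw, hw0⟩ := h
  filter_upwards [(mkR_eq_mkR_iff.1 hw).eventually_abs_lt n, Ioc_mem_nhdsGT one_pos]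
    with ε hwz hε
  linarith [hw0 ε hε.1 hε.2, (abs_lt.1 hwz).2, Pi.sub_apply w.1 z.1 ε]

lemma not_nonnegQ_sub_mul_alphaQ_pow {x : EMring} (hid : Negligible (x.1 * x.1 - x.1))
    (hne : ¬ Negligible (x.1 - 1)) (n : ℕ) :
    ¬ NonnegQ (mkR x - (1 - mkR x) * alphaQ ^ n) := by
  intro h
  rw [← mkR_alphaNet, show mkR x - (1 - mkR x) * mkR alphaNet ^ n
      = mkR (x - (1 - x) * alphaNet ^ n) by simp [mkR]] at h
  obtain ⟨ε, hx, hz, hε⟩ := ((frequently_abs_lt_of_idempotent hid hne (n + 1)).and_eventually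
    ((h.eventually_neg_pow_lt (n + 1)).and (Ioo_mem_nhdsGT (by norm_num : (0 : ℝ) < 1 / 3)))).exists
  push_cast [Pi.sub_apply, Pi.mul_apply, Pi.one_apply, Pi.pow_apply, alphaNet_apply] at hz
  have hpn : 0 < ε ^ n := pow_pos hε.1 n
  have hpn1 : ε ^ n ≤ 1 := pow_le_one₀ hε.1.le (by linarith [hε.2])
  rw [pow_succ] at hx hz
  nlinarith [abs_lt.1 hx, hε.2, mul_le_mul_of_nonneg_left hpn1 hpn.le]

lemma InVr.eventually_abs_lt {r : ℝ} {y : EMring} (h : InVr r (mkR y)) :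
    ∀ᶠ ε in 𝓝[>] (0 : ℝ), |y.1 ε| < 2 * ε ^ r := by
  obtain ⟨y', hy', hsmall⟩ := h
  filter_upwards [smallEv_iff_eventually.1 hsmall,
    (mkR_eq_mkR_iff.1 hy').eventually_abs_lt ⌈r⌉₊, Ioc_mem_nhdsGT one_pos] with ε hy'ε hdiff hε
  have hpow : ε ^ ⌈r⌉₊ ≤ ε ^ r := by
    rw [← Real.rpow_natCast]
    exact Real.rpow_le_rpow_of_exponent_ge hε.1 hε.2 (Nat.le_ceil r)
  rw [Pi.sub_apply] at hdiff
  linarith [abs_sub_abs_le_abs_sub (y.1 ε) (y'.1 ε), abs_sub_comm (y.1 ε) (y'.1 ε)]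

-- `VQ z` is the `sSup` of this set, a junk value unless the set is bounded above.
lemma bddAbove_setOf_inVr {z : Rbar} (hz : z ≠ 0) : BddAbove {r | InVr r z} := by
  obtain ⟨y, rfl⟩ := mkR_surjective z
  obtain ⟨m, hm⟩ := exists_frequently_pow_le_of_not_negligible (mt mkR_eq_zero_iff.2 hz)
  refine ⟨m + 1, fun r hr => ?_⟩
  by_contra! hlt
  obtain ⟨ε, hlow, hup, hε⟩ := (hm.and_eventually (hr.eventually_abs_lt.and
    (Ioo_mem_nhdsGT (by norm_num : (0 : ℝ) < 1 / 2)))).exists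
  have hpow : ε ^ r ≤ ε ^ m * ε := by
    rw [← pow_succ, ← Real.rpow_natCast, Nat.cast_succ]
    exact Real.rpow_le_rpow_of_exponent_ge hε.1 (by linarith [hε.2]) hlt.le
  nlinarith [pow_pos hε.1 m, hε.2]

lemma normQ_nonneg (z : Rbar) : 0 ≤ normQ z := by
  unfold normQ
  split_ifs
  exacts [le_rfl, (Real.exp_pos _).le]

lemma normQ_le_exp_neg_of_inVr {r : ℝ} {z : Rbar} (h : InVr r z) : normQ z ≤ Real.exp (-r) := by
  unfold normQ
  split_ifs with hz
  · positivity
  · exact Real.exp_le_exp.2 (neg_le_neg (le_csSup (bddAbove_setOf_inVr hz) h))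

lemma inVr_mkR_mul_alphaQ_pow {y : EMring} {C : ℝ} (hy : ∀ᶠ ε in 𝓝[>] (0 : ℝ), |y.1 ε| ≤ C)
    (n : ℕ) : InVr (n - 1) (mkR y * alphaQ ^ n) := by
  refine ⟨y * alphaNet ^ n, by simp [mkR, ← mkR_alphaNet], smallEv_iff_eventually.2 ?_⟩
  filter_upwards [hy, Ioo_mem_nhdsGT (by positivity : (0 : ℝ) < 1 / (|C| + 1))] with ε hyε hε
  have hε0 : 0 < ε := hε.1
  have hCε : |C| * ε < 1 := by
    have := hε.2
    rw [lt_div_iff₀ (by positivity)] at this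
    nlinarith
  push_cast [Pi.mul_apply, Pi.pow_apply, alphaNet_apply]
  rw [Real.rpow_sub hε0, Real.rpow_one, Real.rpow_natCast, lt_div_iff₀ hε0, abs_mul,
    abs_of_pos (pow_pos hε0 n)]
  have hpn := pow_pos hε0 n
  nlinarith [mul_le_mul_of_nonneg_right (hyε.trans (le_abs_self C)) (mul_pos hpn hε0).le,
    mul_lt_mul_of_pos_left hCε hpn]

/-- the positive cone of `R̄` is not open in the sharp topology: for any
nontrivial idempotent `e`, the elements `x_n = e − (1−e)·α^n` are not nonnegative, yet
`x_n → e` in the sharp topology, and `e` is nonnegative. -/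
theorem positive_cone_not_open :
    ∀ e : Rbar, e * e = e → e ≠ 0 → e ≠ 1 →
      NonnegQ e ∧
      (∀ n : ℕ, ¬ NonnegQ (e - (1 - e) * alphaQ ^ n)) ∧
      Filter.Tendsto (fun n : ℕ => sharpDist (e - (1 - e) * alphaQ ^ n) e)
        Filter.atTop (nhds 0) := by
  intro e hee _ hne
  obtain ⟨x, rfl⟩ := mkR_surjective e
  have hid : Negligible (x.1 * x.1 - x.1) :=
    (mkR_eq_zero_iff (x := x * x - x)).1 (by simpa [mkR, sub_eq_zero] using hee)
  have hne' : ¬ Negligible (x.1 - 1) := fun h =>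
    hne (by simpa [mkR, sub_eq_zero] using (mkR_eq_zero_iff (x := x - 1)).2 h)
  refine ⟨nonnegQ_of_idempotent hid, not_nonnegQ_sub_mul_alphaQ_pow hid hne', ?_⟩
  have hdist (n : ℕ) :
      sharpDist (mkR x - (1 - mkR x) * alphaQ ^ n) (mkR x) ≤ Real.exp (1 - n) := by
    have := normQ_le_exp_neg_of_inVr
      (inVr_mkR_mul_alphaQ_pow (y := x - 1) (eventually_abs_sub_one_le_of_idempotent hid) n)
    rw [sharpDist, show mkR x - (1 - mkR x) * alphaQ ^ n - mkR x = mkR (x - 1) * alphaQ ^ n by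
      simp only [mkR, map_sub, map_one]; ring]
    simpa using this
  refine squeeze_zero (fun n => normQ_nonneg _) hdist ?_
  exact Real.tendsto_exp_atBot.comp
    (tendsto_atBot_add_const_left _ 1 (tendsto_neg_atTop_atBot.comp tendsto_natCast_atTop_atTop))
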